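/- Let Λ₂ = ℤ[t₁^{±1}, t₂^{±1}] and let M be the Λ₂-module presented by generators a₁, a₂, a₇ and relations (1−t₂)(a₇ − a₂) = 0 and (−1+2t₁−t₁²)a₁ + t₂(t₁−t₁²−1)a₂ + (1−t₁+t₁²t₂)a₇ = 0. Let M' be the Λ₂-module presented by generators u, v and the single relation (1−t₂)·((1−t₁)(1−t₂)u − (1−t₁)²v) = 0. Then there is a Λ₂-module isomorphism M ≅ M' sending a₂ ↦ u and a₁ + a₂ − a₇ ↦ v. -/

import Mathlib

/-- The Laurent polynomial ring `ℤ[t₁^{±1}, t₂^{±1}]`. -/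
noncomputable abbrev Lambda2 : Type := AddMonoidAlgebra ℤ (Fin 2 →₀ ℤ)

noncomputable def T₁ : Lambda2 := AddMonoidAlgebra.single (Finsupp.single 0 1) 1
noncomputable def T₂ : Lambda2 := AddMonoidAlgebra.single (Finsupp.single 1 1) 1

/-- Free module on generators `a₁, a₂, a₇` (indices 0, 1, 2). -/
noncomputable abbrev F3 : Type := Fin 3 →₀ Lambda2

noncomputable def a₁ : F3 := Finsupp.single 0 1
noncomputable def a₂ : F3 := Finsupp.single 1 1
noncomputable def a₇ : F3 := Finsupp.single 2 1

/-- `(1−t₂)(a₇ − a₂) = 0` -/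
noncomputable def r₁ : F3 := (1 - T₂) • (a₇ - a₂)
/-- `(−1+2t₁−t₁²)a₁ + t₂(t₁−t₁²−1)a₂ + (1−t₁+t₁²t₂)a₇ = 0` -/
noncomputable def r₂ : F3 :=
  (-1 + 2 * T₁ - T₁ ^ 2) • a₁ + (T₂ * (T₁ - T₁ ^ 2 - 1)) • a₂ + (1 - T₁ + T₁ ^ 2 * T₂) • a₇

/-- The module presented by generators `a₁, a₂, a₇` and relations `r₁, r₂`. -/
noncomputable abbrev Mmod : Type := F3 ⧸ Submodule.span Lambda2 {r₁, r₂}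

/-- Free module on generators `u, v` (indices 0, 1). -/
noncomputable abbrev F2 : Type := Fin 2 →₀ Lambda2

noncomputable def u : F2 := Finsupp.single 0 1
noncomputable def v : F2 := Finsupp.single 1 1

/-- `(1−t₂)·((1−t₁)(1−t₂)u − (1−t₁)²v) = 0` -/
noncomputable def r : F2 := (1 - T₂) • (((1 - T₁) * (1 - T₂)) • u - ((1 - T₁) ^ 2) • v)

/-- The module presented by generators `u, v` and the single relation `r`. -/
noncomputable abbrev M'mod : Type := F2 ⧸ Submodule.span Lambda2 {r}

-- auxiliary
noncomputable def S₁ : Lambda2 := AddMonoidAlgebra.single (Finsupp.single 0 (-1)) 1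

lemma hS : S₁ * T₁ = 1 := by
  rw [S₁, T₁, AddMonoidAlgebra.single_mul_single]
  simp [AddMonoidAlgebra.one_def]

noncomputable def w1 : F2 := S₁ • ((1 - T₁ + T₁ ^ 2) • v - ((1 - T₁) * (1 - T₂)) • u)

noncomputable def φ0 : F3 →ₗ[Lambda2] F2 :=
  Finsupp.linearCombination Lambda2 ![w1, u, w1 + u - v]

noncomputable def ψ0 : F2 →ₗ[Lambda2] F3 :=
  Finsupp.linearCombination Lambda2 ![a₂, a₁ + a₂ - a₇]

lemma phi_a1 : φ0 a₁ = w1 := by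
  simp [φ0, a₁, Finsupp.linearCombination_single]
lemma phi_a2 : φ0 a₂ = u := by
  simp [φ0, a₂, Finsupp.linearCombination_single]
lemma phi_a7 : φ0 a₇ = w1 + u - v := by
  simp [φ0, a₇, Finsupp.linearCombination_single]
lemma psi_u : ψ0 u = a₂ := by
  simp [ψ0, u, Finsupp.linearCombination_single]
lemma psi_v : ψ0 v = a₁ + a₂ - a₇ := by
  simp [ψ0, v, Finsupp.linearCombination_single]

lemma phi_r1 : φ0 r₁ = (-S₁) • r := by
  simp only [r₁, map_smul, map_sub, phi_a7, phi_a2, w1, r]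
  match_scalars
  · linear_combination (1 - T₂) * hS
  · ring

lemma phi_r2 : φ0 r₂ = T₁ • r := by
  simp only [r₂, map_smul, map_add, phi_a1, phi_a2, phi_a7, w1, r]
  match_scalars
  · linear_combination (1 - 2*T₁ + T₁*T₂ + 2*T₁^2 - T₁^2*T₂ - T₁^3 + T₁^3*T₂) * hS
  · linear_combination (-1 + T₂ + 2*T₁ - 3*T₁*T₂ + T₁*T₂^2 - T₁^2 + 2*T₁^2*T₂ - T₁^2*T₂^2) * hS

lemma psi_r : ψ0 r = (1 - T₂) • r₂ + (T₁ ^ 2 * (1 - T₂) - T₁) • r₁ := by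
  simp only [r, map_smul, map_sub, psi_u, psi_v, r₁, r₂]
  match_scalars <;> ring

lemma psiphi1 : ψ0 (φ0 a₁) = a₁ - S₁ • (r₂ + T₁ ^ 2 • r₁) := by
  rw [phi_a1]
  simp only [w1, map_smul, map_sub, psi_u, psi_v, r₁, r₂]
  match_scalars
  · linear_combination hS
  · ring
  · ring

lemma psiphi7 : ψ0 (φ0 a₇) = a₇ - S₁ • (r₂ + T₁ ^ 2 • r₁) := by
  rw [phi_a7]
  simp only [w1, map_smul, map_sub, map_add, psi_u, psi_v, r₁, r₂]
  match_scalars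
  · linear_combination hS
  · ring
  · ring

lemma phipsiv : φ0 (ψ0 v) = v := by
  rw [psi_v]
  simp only [map_add, map_sub, phi_a1, phi_a2, phi_a7]
  abel

lemma rel_mem : r₂ + T₁ ^ 2 • r₁ ∈ Submodule.span Lambda2 ({r₁, r₂} : Set F3) := by
  have h1 : r₁ ∈ Submodule.span Lambda2 ({r₁, r₂} : Set F3) :=
    Submodule.subset_span (by simp)
  have h2 : r₂ ∈ Submodule.span Lambda2 ({r₁, r₂} : Set F3) :=
    Submodule.subset_span (by simp)
  exact Submodule.add_mem _ h2 (Submodule.smul_mem _ _ h1)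

noncomputable def Phi : Mmod →ₗ[Lambda2] M'mod :=
  Submodule.liftQ _ ((Submodule.span Lambda2 {r}).mkQ.comp φ0) (by
    rw [Submodule.span_le]
    rintro x hx
    have hr : r ∈ Submodule.span Lambda2 ({r} : Set F2) := Submodule.subset_span rfl
    rcases hx with h | h
    · subst h
      simp only [SetLike.mem_coe, LinearMap.mem_ker, LinearMap.comp_apply,
        Submodule.mkQ_apply, Submodule.Quotient.mk_eq_zero, phi_r1]
      exact Submodule.smul_mem _ _ hr
    · rw [Set.mem_singleton_iff] at h
      subst h
      simp only [SetLike.mem_coe, LinearMap.mem_ker, LinearMap.comp_apply,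
        Submodule.mkQ_apply, Submodule.Quotient.mk_eq_zero, phi_r2]
      exact Submodule.smul_mem _ _ hr)

noncomputable def Psi : M'mod →ₗ[Lambda2] Mmod :=
  Submodule.liftQ _ ((Submodule.span Lambda2 {r₁, r₂}).mkQ.comp ψ0) (by
    rw [Submodule.span_le]
    rintro x hx
    rw [Set.mem_singleton_iff] at hx
    subst hx
    simp only [SetLike.mem_coe, LinearMap.mem_ker, LinearMap.comp_apply,
      Submodule.mkQ_apply, Submodule.Quotient.mk_eq_zero, psi_r]
    have h1 : r₁ ∈ Submodule.span Lambda2 ({r₁, r₂} : Set F3) :=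
      Submodule.subset_span (by simp)
    have h2 : r₂ ∈ Submodule.span Lambda2 ({r₁, r₂} : Set F3) :=
      Submodule.subset_span (by simp)
    exact Submodule.add_mem _ (Submodule.smul_mem _ _ h2) (Submodule.smul_mem _ _ h1))

lemma Phi_mk (x : F3) : Phi (Submodule.Quotient.mk x) = Submodule.Quotient.mk (φ0 x) := rfl
lemma Psi_mk (x : F2) : Psi (Submodule.Quotient.mk x) = Submodule.Quotient.mk (ψ0 x) := rfl

lemma psiphi_quot (x : F3) :
    Psi (Phi (Submodule.Quotient.mk x)) = Submodule.Quotient.mk x := by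
  have key : ∀ y : F3, (Submodule.Quotient.mk (ψ0 (φ0 y)) : Mmod) = Submodule.Quotient.mk y → True := fun _ _ => trivial
  rw [Phi_mk, Psi_mk]
  rw [Submodule.Quotient.eq]
  induction x using Finsupp.induction_linear with
  | zero => simp
  | add f g hf hg =>
      have : ψ0 (φ0 (f + g)) - (f + g) = (ψ0 (φ0 f) - f) + (ψ0 (φ0 g) - g) := by
        simp only [map_add]; abel
      rw [this]; exact Submodule.add_mem _ hf hg
  | single i c =>
      have hsm : ∀ y : F3, Finsupp.single i c = c • y → ψ0 (φ0 (Finsupp.single i c)) - Finsupp.single i c = c • (ψ0 (φ0 y) - y) := by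
        intro y hy
        rw [hy, map_smul, map_smul, smul_sub]
      fin_cases i
      · rw [hsm a₁ (by simp [a₁, Finsupp.smul_single])]
        apply Submodule.smul_mem
        rw [psiphi1]
        have : a₁ - S₁ • (r₂ + T₁ ^ 2 • r₁) - a₁ = -(S₁ • (r₂ + T₁ ^ 2 • r₁)) := by abel
        rw [this]
        exact Submodule.neg_mem _ (Submodule.smul_mem _ _ rel_mem)
      · rw [hsm a₂ (by simp [a₂, Finsupp.smul_single])]
        apply Submodule.smul_mem
        rw [phi_a2, psi_u]
        simp
      · rw [hsm a₇ (by simp [a₇, Finsupp.smul_single])]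
        apply Submodule.smul_mem
        rw [psiphi7]
        have : a₇ - S₁ • (r₂ + T₁ ^ 2 • r₁) - a₇ = -(S₁ • (r₂ + T₁ ^ 2 • r₁)) := by abel
        rw [this]
        exact Submodule.neg_mem _ (Submodule.smul_mem _ _ rel_mem)

lemma phipsi_quot (x : F2) :
    Phi (Psi (Submodule.Quotient.mk x)) = Submodule.Quotient.mk x := by
  rw [Psi_mk, Phi_mk, Submodule.Quotient.eq]
  induction x using Finsupp.induction_linear with
  | zero => simp
  | add f g hf hg =>
      have : φ0 (ψ0 (f + g)) - (f + g) = (φ0 (ψ0 f) - f) + (φ0 (ψ0 g) - g) := by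
        simp only [map_add]; abel
      rw [this]; exact Submodule.add_mem _ hf hg
  | single i c =>
      have hsm : ∀ y : F2, Finsupp.single i c = c • y → φ0 (ψ0 (Finsupp.single i c)) - Finsupp.single i c = c • (φ0 (ψ0 y) - y) := by
        intro y hy
        rw [hy, map_smul, map_smul, smul_sub]
      fin_cases i
      · rw [hsm u (by simp [u, Finsupp.smul_single])]
        apply Submodule.smul_mem
        rw [psi_u, phi_a2]; simp
      · rw [hsm v (by simp [v, Finsupp.smul_single])]
        apply Submodule.smul_mem
        rw [phipsiv]; simp

theorem stmt_13 :
    ∃ e : Mmod ≃ₗ[Lambda2] M'mod,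
      e (Submodule.Quotient.mk a₂) = Submodule.Quotient.mk u ∧
      e (Submodule.Quotient.mk (a₁ + a₂ - a₇)) = Submodule.Quotient.mk v := by
  refine ⟨{ toLinearMap := Phi
            invFun := Psi
            left_inv := ?_
            right_inv := ?_ }, ?_, ?_⟩
  · intro x
    induction x using Submodule.Quotient.induction_on with
    | H y => exact psiphi_quot y
  · intro x
    induction x using Submodule.Quotient.induction_on with
    | H y => exact phipsi_quot y
  · show Phi _ = _
    rw [Phi_mk, phi_a2]
  · show Phi _ = _
    rw [Phi_mk]
    congr 1
    simp only [map_add, map_sub, phi_a1, phi_a2, phi_a7]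
    abel
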